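/- Let k ≥ 2 with k+1 divisible by 3, set t = (k−2)/3, let a ∈ ℝ, and let (P_n) and (C_n) be real sequences with P_n = a·n + O(1) and satisfying, for all n ≥ k, the recurrence C_n = P_n + Σ_{1 ≤ p < q ≤ n} [C(p−1, t)·C(q−p−1, t)·C(n−q, t) / C(n,k)] · (C_{p−1} + C_{q−p−1} + C_{n−q}), with arbitrary fixed values C_n for n < k. Then C_n = (1/(H_{k+1} − H_{(k+1)/3})) · a · n·ln n + O(n), where H_m = Σ_{j=1}^{m} 1/j denotes the m-th harmonic number. In particular, for k = 5 the leading factor is 1/(H_6 − H_2) = 20/19. -/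
import Mathlib

open Finset

/-- The `m`-th harmonic number `H_m = Σ_{j=1}^m 1/j`. -/
noncomputable def harmonicNum (m : ℕ) : ℝ := ∑ j ∈ Finset.Icc 1 m, (1 : ℝ) / (j : ℝ)

lemma harmonicNum_zero : harmonicNum 0 = 0 := by simp [harmonicNum]

lemma harmonicNum_succ (m : ℕ) : harmonicNum (m+1) = harmonicNum m + 1/((m:ℝ)+1) := by
  rw [harmonicNum, harmonicNum, Finset.sum_Icc_succ_top (by omega)]
  push_cast; ring

-- algebra step used in both base and inductive step of keyH

lemma harmonicNum_nonneg (m : ℕ) : 0 ≤ harmonicNum m := by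
  apply Finset.sum_nonneg; intro i _; positivity

lemma harmonicNum_eq (m : ℕ) : harmonicNum m = ((harmonic m : ℚ) : ℝ) := by
  rw [harmonicNum, harmonic_eq_sum_Icc]
  push_cast
  simp [one_div]

lemma vandermonde_dual (r s : ℕ) : ∀ M : ℕ, ∑ j ∈ range (M+1), (j.choose r) * ((M - j).choose s) = (M+1).choose (r+s+1) := by
  induction s with
  | zero =>
    intro M
    simp only [Nat.choose_zero_right, mul_one]
    rw [← Nat.sum_Icc_choose]
    refine (Finset.sum_subset ?_ ?_).symm
    · intro x hx; simp at hx ⊢; omega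
    · intro x hx hx'; simp at hx hx'
      exact Nat.choose_eq_zero_of_lt (by omega)
  | succ s ih =>
    intro M
    induction M with
    | zero => simp [Nat.choose_eq_zero_of_lt]
    | succ M ihM =>
      rw [Finset.sum_range_succ]
      have h0 : (Nat.succ M - Nat.succ M).choose (s+1) = 0 := by
        simp
      have hsplit : ∀ j ∈ range (M+1), (j.choose r) * ((M + 1 - j).choose (s+1))
          = (j.choose r) * ((M - j).choose (s+1)) + (j.choose r) * ((M-j).choose s) := by
        intro j hj
        simp at hj
        have : M + 1 - j = (M - j) + 1 := by omega
        rw [this, Nat.choose_succ_succ]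
        ring
      rw [Finset.sum_congr rfl hsplit, Finset.sum_add_distrib, ihM, ih M]
      rw [show M + 1 - (M+1) = 0 by omega, Nat.choose_eq_zero_of_lt (by omega : 0 < s+1), mul_zero, add_zero]
      have e : r+(s+1)+1 = r+s+1+1 := by ring
      rw [e] at *
      have hp := Nat.choose_succ_succ (M+1) (r+s+1)
      simp only [Nat.succ_eq_add_one] at hp
      omega

lemma alg_step (M K : ℕ) (X Y Z h hK hr : ℝ)
    (hZ : Z = X + Y) (hid : ((M:ℝ)+2) * Y = Z * ((K:ℝ)+1)) :
    X*(h - (hK + 1/((K:ℝ)+1)) + hr) + Y*(h - hK + hr)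
      = Z*((h + 1/((M:ℝ)+2)) - (hK + 1/((K:ℝ)+1)) + hr) := by
  have hm : ((M:ℝ)+2) ≠ 0 := by positivity
  have hk : ((K:ℝ)+1) ≠ 0 := by positivity
  subst hZ
  field_simp
  ring_nf
  nlinarith [hid]

lemma keyH (r s : ℕ) : ∀ M : ℕ, ∑ j ∈ range (M+1),
      (j.choose r : ℝ) * ((M - j).choose s : ℝ) * harmonicNum j
    = ((M+1).choose (r+s+1) : ℝ) * (harmonicNum (M+1) - harmonicNum (r+s+1) + harmonicNum r) := by
  induction s with
  | zero =>
    intro M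
    induction M with
    | zero =>
      simp only [zero_add, Finset.sum_range_one]
      rcases Nat.eq_zero_or_pos r with h | h
      · subst h; norm_num [harmonicNum]
      · rw [Nat.choose_eq_zero_of_lt (by omega : 1 < r + 0 + 1)]
        norm_num [harmonicNum, Nat.choose_eq_zero_of_lt h]
    | succ M ihM =>
      simp only [Nat.choose_zero_right, Nat.cast_one, mul_one] at ihM ⊢
      rw [Finset.sum_range_succ, ihM]
      rw [show M+1+1 = M+2 from rfl, show r+0+1 = r+1 from rfl]
      have hid : ((M:ℝ)+2) * ((M+1).choose r : ℝ) = ((M+2).choose (r+1) : ℝ) * ((r:ℝ)+1) := by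
        have := Nat.add_one_mul_choose_eq (M+1) r
        have h2 : (M+1+1) * (M+1).choose r = (M+2).choose (r+1) * (r+1) := by
          simpa [Nat.succ_eq_add_one] using this
        exact_mod_cast h2
      have hZ : ((M+2).choose (r+1) : ℝ) = ((M+1).choose (r+1) : ℝ) + ((M+1).choose r : ℝ) := by
        have := Nat.choose_succ_succ (M+1) r
        simp only [Nat.succ_eq_add_one] at this
        rw [show M+1+1 = M+2 from rfl] at this
        exact_mod_cast by omega
      have := alg_step M r ((M+1).choose (r+1) : ℝ) ((M+1).choose r : ℝ) ((M+2).choose (r+1) : ℝ)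
        (harmonicNum (M+1)) (harmonicNum r) (harmonicNum r) hZ hid
      rw [harmonicNum_succ (M+1), harmonicNum_succ r]
      push_cast
      push_cast at this
      linear_combination this
  | succ s ih =>
    intro M
    induction M with
    | zero =>
      rw [Finset.sum_range_one]
      rw [Nat.choose_eq_zero_of_lt (by omega : 1 < r + (s+1) + 1)]
      simp [harmonicNum]
    | succ M ihM =>
      rw [Finset.sum_range_succ]
      have h0 : ((M + 1 - (M+1)).choose (s+1) : ℝ) = 0 := by
        rw [Nat.sub_self]; exact_mod_cast Nat.choose_eq_zero_of_lt (by omega)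
      rw [h0, mul_zero, zero_mul, add_zero]
      have hsplit : ∀ j ∈ range (M+1), (j.choose r : ℝ) * ((M + 1 - j).choose (s+1) : ℝ) * harmonicNum j
          = (j.choose r : ℝ) * ((M - j).choose (s+1) : ℝ) * harmonicNum j
            + (j.choose r : ℝ) * ((M - j).choose s : ℝ) * harmonicNum j := by
        intro j hj
        simp only [Finset.mem_range] at hj
        rw [show M + 1 - j = (M - j) + 1 by omega, Nat.choose_succ_succ]
        push_cast; ring
      rw [Finset.sum_congr rfl hsplit, Finset.sum_add_distrib, ihM, ih M]
      have e : r+(s+1)+1 = (r+s+1)+1 := by ring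
      rw [e]
      have hid : ((M:ℝ)+2) * ((M+1).choose (r+s+1) : ℝ) = ((M+2).choose (r+s+1+1) : ℝ) * ((r:ℝ)+(s:ℝ)+1+1) := by
        have := Nat.add_one_mul_choose_eq (M+1) (r+s+1)
        have h2 : (M+1+1) * (M+1).choose (r+s+1) = (M+2).choose (r+s+1+1) * (r+s+1+1) := by
          simpa [Nat.succ_eq_add_one] using this
        exact_mod_cast h2
      have hZ : ((M+2).choose (r+s+1+1) : ℝ) = ((M+1).choose (r+s+1+1) : ℝ) + ((M+1).choose (r+s+1) : ℝ) := by
        have := Nat.choose_succ_succ (M+1) (r+s+1)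
        simp only [Nat.succ_eq_add_one] at this
        rw [show M+1+1 = M+2 from rfl] at this
        exact_mod_cast by omega
      have halg := alg_step M (r+s+1) ((M+1).choose (r+s+1+1) : ℝ) ((M+1).choose (r+s+1) : ℝ)
        ((M+2).choose (r+s+1+1) : ℝ) (harmonicNum (M+1)) (harmonicNum (r+s+1)) (harmonicNum r)
        hZ (by push_cast; linarith)
      rw [show M+1+1 = M+2 from rfl, harmonicNum_succ (M+1), harmonicNum_succ (r+s+1)]
      push_cast
      push_cast at halg
      linear_combination halg

lemma triangle_swap (N : ℕ) (f : ℕ → ℕ → ℝ) :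
    ∑ i ∈ range N, ∑ j ∈ range (N - i), f i j = ∑ j ∈ range N, ∑ i ∈ range (N - j), f i j := by
  calc ∑ i ∈ range N, ∑ j ∈ range (N-i), f i j
      = ∑ i ∈ range N, ∑ j ∈ range N, if i + j < N then f i j else 0 := by
        refine Finset.sum_congr rfl fun i _ => ?_
        have h1 : range (N - i) = (range N).filter (fun j => i + j < N) := by
          ext j; simp only [Finset.mem_range, Finset.mem_filter]; omega
        rw [h1, Finset.sum_filter]
    _ = ∑ j ∈ range N, ∑ i ∈ range N, if i + j < N then f i j else 0 := Finset.sum_comm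
    _ = ∑ j ∈ range N, ∑ i ∈ range (N-j), f i j := by
        refine Finset.sum_congr rfl fun j _ => ?_
        have h2 : range (N - j) = (range N).filter (fun i => i + j < N) := by
          ext i; simp only [Finset.mem_range, Finset.mem_filter]; omega
        rw [h2, Finset.sum_filter]

lemma inner_vdm (t m : ℕ) : ∑ j ∈ range m, ((j.choose t : ℝ) * (((m-1) - j).choose t : ℝ)) = (m.choose (2*t+1) : ℝ) := by
  cases m with
  | zero => simp [Nat.choose_eq_zero_of_lt]
  | succ M =>
    have := vandermonde_dual t t M
    have h : ∑ j ∈ range (M+1), (j.choose t) * ((M - j).choose t) = (M+1).choose (2*t+1) := by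
      rw [this]; congr 1; ring
    calc ∑ j ∈ range (M+1), ((j.choose t : ℝ) * (((M+1-1) - j).choose t : ℝ))
        = ((∑ j ∈ range (M+1), (j.choose t) * ((M - j).choose t) : ℕ) : ℝ) := by
          push_cast; rfl
      _ = ((M+1).choose (2*t+1) : ℝ) := by rw [h]

lemma margin1 (t n : ℕ) (g : ℕ → ℝ) :
    ∑ i ∈ range n, ∑ j ∈ range (n-1-i), (i.choose t : ℝ) * (j.choose t : ℝ) * ((n-2-i-j).choose t : ℝ) * g i
    = ∑ i ∈ range n, (i.choose t : ℝ) * ((n-1-i).choose (2*t+1) : ℝ) * g i := by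
  refine Finset.sum_congr rfl fun i hi => ?_
  simp only [Finset.mem_range] at hi
  have : ∀ j ∈ range (n-1-i), (i.choose t : ℝ) * (j.choose t : ℝ) * ((n-2-i-j).choose t : ℝ) * g i
      = ((i.choose t : ℝ) * g i) * ((j.choose t : ℝ) * ((((n-1-i)-1) - j).choose t : ℝ)) := by
    intro j hj
    simp only [Finset.mem_range] at hj
    rw [show n-2-i-j = ((n-1-i)-1)-j by omega]
    ring
  rw [Finset.sum_congr rfl this, ← Finset.mul_sum, inner_vdm t (n-1-i)]
  ring

-- marginal for "g j"

lemma margin2 (t n : ℕ) (g : ℕ → ℝ) :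
    ∑ i ∈ range n, ∑ j ∈ range (n-1-i), (i.choose t : ℝ) * (j.choose t : ℝ) * ((n-2-i-j).choose t : ℝ) * g j
    = ∑ i ∈ range n, (i.choose t : ℝ) * ((n-1-i).choose (2*t+1) : ℝ) * g i := by
  rcases Nat.eq_zero_or_pos n with rfl | hn
  · simp
  -- shrink outer range n to range (n-1)
  have hshrink : ∀ (F : ℕ → ℕ → ℝ),
      ∑ i ∈ range n, ∑ j ∈ range (n-1-i), F i j = ∑ i ∈ range (n-1), ∑ j ∈ range ((n-1) - i), F i j := by
    intro F
    rw [show n = (n-1)+1 by omega, Finset.sum_range_succ]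
    rw [show (n-1)+1-1-(n-1) = 0 by omega]
    simp only [Finset.range_zero, Finset.sum_empty, add_zero]
    refine Finset.sum_congr rfl fun i hi => ?_
    simp only [Finset.mem_range] at hi
    rw [show (n-1)+1-1-i = (n-1)-i by omega]
  rw [hshrink, triangle_swap]
  -- now inner over i
  have hswap : ∀ j ∈ range (n-1), ∑ i ∈ range ((n-1)-j), (i.choose t : ℝ) * (j.choose t : ℝ) * ((n-2-i-j).choose t : ℝ) * g j
      = (j.choose t : ℝ) * ((n-1-j).choose (2*t+1) : ℝ) * g j := by
    intro j hj
    simp only [Finset.mem_range] at hj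
    have : ∀ i ∈ range (n-1-j), (i.choose t : ℝ) * (j.choose t : ℝ) * ((n-2-i-j).choose t : ℝ) * g j
        = ((j.choose t : ℝ) * g j) * ((i.choose t : ℝ) * ((((n-1-j)-1) - i).choose t : ℝ)) := by
      intro i hi
      simp only [Finset.mem_range] at hi
      rw [show n-2-i-j = ((n-1-j)-1)-i by omega]
      ring
    rw [Finset.sum_congr rfl this, ← Finset.mul_sum, inner_vdm t (n-1-j)]
    ring
  rw [Finset.sum_congr rfl hswap]
  -- extend range (n-1) to range n
  rw [show n = (n-1)+1 by omega, Finset.sum_range_succ]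
  rw [show (n-1)+1-1-(n-1) = 0 by omega, Nat.choose_eq_zero_of_lt (by omega : 0 < 2*t+1)]
  simp

lemma margin3 (t n : ℕ) (g : ℕ → ℝ) :
    ∑ i ∈ range n, ∑ j ∈ range (n-1-i), (i.choose t : ℝ) * (j.choose t : ℝ) * ((n-2-i-j).choose t : ℝ) * g (n-2-i-j)
    = ∑ i ∈ range n, (i.choose t : ℝ) * ((n-1-i).choose (2*t+1) : ℝ) * g i := by
  rw [← margin2 t n g]
  refine Finset.sum_congr rfl fun i hi => ?_
  simp only [Finset.mem_range] at hi
  have h1 : ∀ j ∈ range (n-1-i), (i.choose t : ℝ) * (j.choose t : ℝ) * ((n-2-i-j).choose t : ℝ) * g (n-2-i-j)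
      = (fun l => (i.choose t : ℝ) * (l.choose t : ℝ) * ((n-2-i-l).choose t : ℝ) * g l) ((n-1-i) - 1 - j) := by
    intro j hj
    simp only [Finset.mem_range] at hj
    simp only []
    rw [show (n-1-i)-1-j = n-2-i-j by omega, show n-2-i-(n-2-i-j) = j by omega]
    ring
  rw [Finset.sum_congr rfl h1]
  simpa using Finset.sum_range_reflect (fun l => (i.choose t : ℝ) * (l.choose t : ℝ) * ((n-2-i-l).choose t : ℝ) * g l) (n-1-i)

lemma DS_reindex (n : ℕ) (G : ℕ → ℕ → ℝ) :
    ∑ p ∈ Finset.Icc 1 n, ∑ q ∈ Finset.Icc (p+1) n, G p q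
    = ∑ i ∈ range n, ∑ j ∈ range (n-1-i), G (1+i) (1+i+1+j) := by
  rw [← Finset.Ico_add_one_right_eq_Icc, Finset.sum_Ico_eq_sum_range]
  rw [show n+1-1 = n by omega]
  refine Finset.sum_congr rfl fun i _ => ?_
  rw [← Finset.Ico_add_one_right_eq_Icc, Finset.sum_Ico_eq_sum_range]
  rw [show n+1-(1+i+1) = n-1-i by omega]

lemma DS_eq (t n : ℕ) (g : ℕ → ℝ) :
    ∑ p ∈ Finset.Icc 1 n, ∑ q ∈ Finset.Icc (p+1) n,
      ((p-1).choose t : ℝ) * ((q-p-1).choose t : ℝ) * ((n-q).choose t : ℝ) * (g (p-1) + g (q-p-1) + g (n-q))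
    = 3 * ∑ i ∈ range n, (i.choose t : ℝ) * ((n-1-i).choose (2*t+1) : ℝ) * g i := by
  rw [DS_reindex]
  have hpt : ∀ i ∈ range n, ∀ j ∈ range (n-1-i),
      ((1+i-1).choose t : ℝ) * (((1+i+1+j)-(1+i)-1).choose t : ℝ) * ((n-(1+i+1+j)).choose t : ℝ)
        * (g (1+i-1) + g ((1+i+1+j)-(1+i)-1) + g (n-(1+i+1+j)))
      = (i.choose t : ℝ) * (j.choose t : ℝ) * ((n-2-i-j).choose t : ℝ) * g i
        + (i.choose t : ℝ) * (j.choose t : ℝ) * ((n-2-i-j).choose t : ℝ) * g j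
        + (i.choose t : ℝ) * (j.choose t : ℝ) * ((n-2-i-j).choose t : ℝ) * g (n-2-i-j) := by
    intro i hi j hj
    simp only [Finset.mem_range] at hi hj
    rw [show 1+i-1 = i by omega, show (1+i+1+j)-(1+i)-1 = j by omega,
        show n-(1+i+1+j) = n-2-i-j by omega]
    ring
  calc ∑ i ∈ range n, ∑ j ∈ range (n-1-i), ((1+i-1).choose t : ℝ) * (((1+i+1+j)-(1+i)-1).choose t : ℝ) * ((n-(1+i+1+j)).choose t : ℝ)
        * (g (1+i-1) + g ((1+i+1+j)-(1+i)-1) + g (n-(1+i+1+j)))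
      = ∑ i ∈ range n, ∑ j ∈ range (n-1-i),
        ((i.choose t : ℝ) * (j.choose t : ℝ) * ((n-2-i-j).choose t : ℝ) * g i
        + (i.choose t : ℝ) * (j.choose t : ℝ) * ((n-2-i-j).choose t : ℝ) * g j
        + (i.choose t : ℝ) * (j.choose t : ℝ) * ((n-2-i-j).choose t : ℝ) * g (n-2-i-j)) := by
        refine Finset.sum_congr rfl fun i hi => Finset.sum_congr rfl fun j hj => hpt i hi j hj
    _ = 3 * ∑ i ∈ range n, (i.choose t : ℝ) * ((n-1-i).choose (2*t+1) : ℝ) * g i := by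
        simp only [Finset.sum_add_distrib]
        rw [margin1, margin2, margin3]
        ring

lemma marg_one (t n : ℕ) (hn : 1 ≤ n) :
    ∑ i ∈ range n, (i.choose t : ℝ) * ((n-1-i).choose (2*t+1) : ℝ) = (n.choose (3*t+2) : ℝ) := by
  obtain ⟨M, rfl⟩ : ∃ M, n = M + 1 := ⟨n - 1, by omega⟩
  have := vandermonde_dual t (2*t+1) M
  have h : ((∑ j ∈ range (M+1), (j.choose t) * ((M - j).choose (2*t+1)) : ℕ) : ℝ) = ((M+1).choose (3*t+2) : ℝ) := by
    rw [this, show t+(2*t+1)+1 = 3*t+2 by ring]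
  push_cast at h
  rw [← h]
  refine Finset.sum_congr rfl fun i hi => ?_
  rw [show M+1-1-i = M-i from by omega]

lemma shift_helper (t n : ℕ) (F : ℕ → ℝ) :
    ∑ i ∈ range n, (fun j => ((j.choose (t+1) : ℝ)) * ((n-j).choose (2*t+1) : ℝ) * F j) (i+1)
    = ∑ j ∈ range (n+1), ((j.choose (t+1) : ℝ)) * ((n-j).choose (2*t+1) : ℝ) * F j := by
  rw [Finset.sum_range_succ']
  norm_num

lemma choose_shift (t i : ℕ) : ((i:ℝ)+1) * (i.choose t : ℝ) = ((i+1).choose (t+1) : ℝ) * ((t:ℝ)+1) := by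
  have := Nat.add_one_mul_choose_eq i t
  exact_mod_cast by simpa [Nat.succ_eq_add_one] using this

lemma marg_lin (t n : ℕ) :
    ∑ i ∈ range n, (i.choose t : ℝ) * ((n-1-i).choose (2*t+1) : ℝ) * ((i:ℝ)+1)
    = ((t:ℝ)+1) * ((n+1).choose (3*t+3) : ℝ) := by
  have hpt : ∀ i ∈ range n, (i.choose t : ℝ) * ((n-1-i).choose (2*t+1) : ℝ) * ((i:ℝ)+1)
      = ((t:ℝ)+1) * ((fun j => ((j.choose (t+1) : ℝ)) * ((n-j).choose (2*t+1) : ℝ) * 1) (i+1)) := by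
    intro i hi
    simp only [Finset.mem_range] at hi
    simp only []
    rw [show n-(i+1) = n-1-i by omega]
    nlinarith [choose_shift t i]
  rw [Finset.sum_congr rfl hpt, ← Finset.mul_sum, shift_helper t n (fun _ => 1)]
  have hv : ((∑ j ∈ range (n+1), (j.choose (t+1)) * ((n - j).choose (2*t+1)) : ℕ) : ℝ) = ((n+1).choose (3*t+3) : ℝ) := by
    rw [vandermonde_dual (t+1) (2*t+1) n, show (t+1)+(2*t+1)+1 = 3*t+3 by ring]
  push_cast at hv
  rw [show ∑ j ∈ range (n+1), ((j.choose (t+1) : ℝ)) * ((n-j).choose (2*t+1) : ℝ) * 1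
      = ∑ j ∈ range (n+1), ((j.choose (t+1) : ℝ)) * ((n-j).choose (2*t+1) : ℝ) from by simp, hv]

lemma marg_H (t n : ℕ) :
    ∑ i ∈ range n, (i.choose t : ℝ) * ((n-1-i).choose (2*t+1) : ℝ) * (((i:ℝ)+1) * harmonicNum (i+1))
    = ((t:ℝ)+1) * ((n+1).choose (3*t+3) : ℝ) * (harmonicNum (n+1) - harmonicNum (3*t+3) + harmonicNum (t+1)) := by
  have hpt : ∀ i ∈ range n, (i.choose t : ℝ) * ((n-1-i).choose (2*t+1) : ℝ) * (((i:ℝ)+1) * harmonicNum (i+1))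
      = ((t:ℝ)+1) * ((fun j => ((j.choose (t+1) : ℝ)) * ((n-j).choose (2*t+1) : ℝ) * harmonicNum j) (i+1)) := by
    intro i hi
    simp only [Finset.mem_range] at hi
    simp only []
    rw [show n-(i+1) = n-1-i by omega]
    linear_combination (↑((n - 1 - i).choose (2 * t + 1)) : ℝ) * harmonicNum (i+1) * choose_shift t i
  rw [Finset.sum_congr rfl hpt, ← Finset.mul_sum, shift_helper t n (fun j => harmonicNum j)]
  have hk := keyH (t+1) (2*t+1) n
  rw [show (t+1)+(2*t+1)+1 = 3*t+3 by ring] at hk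
  rw [hk]
  ring

lemma harmonicNum_lt (a b : ℕ) (h : a < b) : harmonicNum a < harmonicNum b := by
  refine Finset.sum_lt_sum_of_subset (i := a + 1) ?_ ?_ ?_ ?_ ?_
  · intro x hx; simp at hx ⊢; omega
  · simp; omega
  · simp
  · positivity
  · intro j _ _; positivity

lemma harmonicNum_mono (a b : ℕ) (h : a ≤ b) : harmonicNum a ≤ harmonicNum b := by
  rcases eq_or_lt_of_le h with rfl | h
  · exact le_rfl
  · exact (harmonicNum_lt a b h).le

lemma harmonicNum_log_lb (n : ℕ) (hn : 1 ≤ n) : Real.log n ≤ harmonicNum (n+1) := by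
  have h1 := log_add_one_le_harmonic n
  have h2 : harmonicNum n ≤ harmonicNum (n+1) := harmonicNum_mono n (n+1) (by omega)
  simp only [harmonicNum_eq] at h2 ⊢
  have h3 : Real.log n ≤ Real.log (↑(n+1)) := by
    apply Real.log_le_log (by positivity)
    push_cast; linarith
  push_cast at h1 h3 ⊢
  linarith

lemma harmonicNum_log_ub (n : ℕ) (hn : 1 ≤ n) : harmonicNum (n+1) ≤ 2 + Real.log n := by
  have h1 := harmonic_le_one_add_log (n+1)
  simp only [harmonicNum_eq]
  have hlog : Real.log (↑(n+1)) ≤ Real.log 2 + Real.log n := by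
    rw [← Real.log_mul (by norm_num) (by positivity)]
    apply Real.log_le_log (by positivity)
    push_cast
    have : (1:ℝ) ≤ (n:ℝ) := by exact_mod_cast hn
    nlinarith
  have h2 : Real.log 2 ≤ 1 := by
    have := Real.log_le_sub_one_of_pos (by norm_num : (0:ℝ) < 2)
    linarith
  push_cast at h1 hlog ⊢
  linarith

lemma EV (t k n : ℕ) (F : ℕ → ℝ) :
    ∑ p ∈ Finset.Icc 1 n, ∑ q ∈ Finset.Icc (p+1) n,
      (((p-1).choose t : ℝ) * ((q-p-1).choose t : ℝ) * ((n-q).choose t : ℝ) / (n.choose k : ℝ))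
        * (F (p-1) + F (q-p-1) + F (n-q))
    = (3 / (n.choose k : ℝ)) * ∑ i ∈ range n, (i.choose t : ℝ) * ((n-1-i).choose (2*t+1) : ℝ) * F i := by
  have step : ∑ p ∈ Finset.Icc 1 n, ∑ q ∈ Finset.Icc (p+1) n,
      (((p-1).choose t : ℝ) * ((q-p-1).choose t : ℝ) * ((n-q).choose t : ℝ) / (n.choose k : ℝ))
        * (F (p-1) + F (q-p-1) + F (n-q))
      = (1 / (n.choose k : ℝ)) * ∑ p ∈ Finset.Icc 1 n, ∑ q ∈ Finset.Icc (p+1) n,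
          ((p-1).choose t : ℝ) * ((q-p-1).choose t : ℝ) * ((n-q).choose t : ℝ)
            * (F (p-1) + F (q-p-1) + F (n-q)) := by
    rw [Finset.mul_sum]
    refine Finset.sum_congr rfl fun p _ => ?_
    rw [Finset.mul_sum]
    refine Finset.sum_congr rfl fun q _ => ?_
    ring
  rw [step, DS_eq]
  ring

lemma hnum20  : 1 / (harmonicNum 6 - harmonicNum 2) = 20 / 19 := by
  have h6 : Finset.Icc 1 6 = {1,2,3,4,5,6} := rfl
  have h2 : Finset.Icc 1 2 = {1,2} := rfl
  rw [harmonicNum, harmonicNum, h6, h2]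
  norm_num [Finset.sum_insert, Finset.mem_insert]

/-- Dual pivot quicksort with the two pivots chosen as the tertiles of a sample of `k`
elements (`3 ∣ k+1`, `t = (k−2)/3`): if the partitioning cost satisfies
`P n = a·n + O(1)` and `C` satisfies the tertiles-of-`k` dual pivot quicksort
recurrence, then `C n = (1/(H_{k+1} − H_{(k+1)/3}))·a·n·ln n + O(n)`; in particular
for `k = 5` the factor is `1/(H_6 − H_2) = 20/19`. -/
theorem dual_pivot_tertiles_of_k_sample (k : ℕ) (hk : 2 ≤ k) (hdiv : 3 ∣ (k + 1))
    (a : ℝ) (P C : ℕ → ℝ)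
    (hP : ∃ K : ℝ, ∀ n : ℕ, |P n - a * (n : ℝ)| ≤ K)
    (hrec : ∀ n : ℕ, k ≤ n →
      C n = P n + ∑ p ∈ Finset.Icc 1 n, ∑ q ∈ Finset.Icc (p + 1) n,
        (((p - 1).choose ((k - 2) / 3) : ℝ) * ((q - p - 1).choose ((k - 2) / 3) : ℝ) *
            ((n - q).choose ((k - 2) / 3) : ℝ) / (n.choose k : ℝ)) *
          (C (p - 1) + C (q - p - 1) + C (n - q))) :
    (∃ K' : ℝ, ∀ n : ℕ, 1 ≤ n →
      |C n - 1 / (harmonicNum (k + 1) - harmonicNum ((k + 1) / 3)) *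
          a * (n : ℝ) * Real.log n| ≤ K' * n) ∧
    1 / (harmonicNum 6 - harmonicNum 2) = 20 / 19 := by
  refine ⟨?_, hnum20⟩
  obtain ⟨t, rfl⟩ : ∃ t, k = 3*t+2 := ⟨(k-2)/3, by omega⟩
  rw [show (3*t+2-2)/3 = t by omega] at hrec
  rw [show 3*t+2+1 = 3*t+3 by omega, show (3*t+3)/3 = t+1 by omega]
  obtain ⟨K, hK⟩ := hP
  set δ : ℝ := harmonicNum (3*t+3) - harmonicNum (t+1) with hδ
  have hδpos : 0 < δ := by
    have := harmonicNum_lt (t+1) (3*t+3) (by omega)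
    simp only [hδ]; linarith
  set B : ℕ → ℝ := fun m => 1/δ * a * (((m:ℝ)+1) * harmonicNum (m+1)) with hB
  set D : ℕ → ℝ := fun m => C m - B m with hD
  set B' : ℝ := |K| + |a| with hB'
  have hB'nn : 0 ≤ B' := by positivity
  set A : ℝ := B' + ∑ m ∈ range (3*t+2), |D m| with hA
  have hAnn : B' ≤ A := by
    have : 0 ≤ ∑ m ∈ range (3*t+2), |D m| := Finset.sum_nonneg fun m _ => abs_nonneg _
    simp only [hA]; linarith
  have hA0 : 0 ≤ A := le_trans hB'nn hAnn
  -- the three ingredients, for n ≥ k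
  have hRpos : ∀ n : ℕ, 3*t+2 ≤ n → 0 < ((n.choose (3*t+2) : ℕ) : ℝ) := by
    intro n hn
    exact_mod_cast Nat.choose_pos hn
  have hRatio : ∀ n : ℕ, 3*((t:ℝ)+1) * (((n+1).choose (3*t+3) : ℕ) : ℝ)
      = ((n:ℝ)+1) * ((n.choose (3*t+2) : ℕ) : ℝ) := by
    intro n
    have := Nat.add_one_mul_choose_eq n (3*t+2)
    rw [show 3*t+2+1 = 3*t+3 by omega] at this
    have h2 : ((n+1) * n.choose (3*t+2) : ℕ) = ((n+1).choose (3*t+3) * (3*t+3) : ℕ) := this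
    have h3 : ((n:ℝ)+1) * (n.choose (3*t+2) : ℝ) = ((n+1).choose (3*t+3) : ℝ) * (3*(t:ℝ)+3) := by
      exact_mod_cast h2
    linarith [h3]
  -- expected value of B-parts
  have hEVB : ∀ n : ℕ, 3*t+2 ≤ n →
      (3 / ((n.choose (3*t+2) : ℕ) : ℝ)) * ∑ i ∈ range n, (i.choose t : ℝ) * ((n-1-i).choose (2*t+1) : ℝ) * B i
      = B n - a * ((n:ℝ)+1) := by
    intro n hn
    have hmB : ∑ i ∈ range n, (i.choose t : ℝ) * ((n-1-i).choose (2*t+1) : ℝ) * B i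
        = (1/δ * a) * (((t:ℝ)+1) * ((n+1).choose (3*t+3) : ℝ) * (harmonicNum (n+1) - δ)) := by
      have hpt : ∀ i ∈ range n, (i.choose t : ℝ) * ((n-1-i).choose (2*t+1) : ℝ) * B i
          = (1/δ * a) * ((i.choose t : ℝ) * ((n-1-i).choose (2*t+1) : ℝ) * (((i:ℝ)+1) * harmonicNum (i+1))) := by
        intro i _
        simp only [hB]
        ring
      rw [Finset.sum_congr rfl hpt, ← Finset.mul_sum, marg_H]
      simp only [hδ]
      ring
    rw [hmB]
    have hR := hRpos n hn
    have hRat := hRatio n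
    calc (3 / ((n.choose (3*t+2) : ℕ) : ℝ)) * (1/δ * a * (((t:ℝ)+1) * ((n+1).choose (3*t+3) : ℝ) * (harmonicNum (n+1) - δ)))
        = (1/δ * a * (harmonicNum (n+1) - δ)) * ((3*((t:ℝ)+1) * (((n+1).choose (3*t+3) : ℕ) : ℝ)) / ((n.choose (3*t+2) : ℕ) : ℝ)) := by
          ring
      _ = (1/δ * a * (harmonicNum (n+1) - δ)) * ((((n:ℝ)+1) * ((n.choose (3*t+2) : ℕ) : ℝ)) / ((n.choose (3*t+2) : ℕ) : ℝ)) := by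
          rw [hRat]
      _ = (1/δ * a * (harmonicNum (n+1) - δ)) * (((n:ℝ)+1)) := by
          rw [mul_div_assoc, div_self hR.ne', mul_one]
      _ = B n - a * ((n:ℝ)+1) := by
          simp only [hB]
          field_simp
  -- expected value of affine bound
  have hEVbnd : ∀ n : ℕ, 3*t+2 ≤ n →
      (3 / ((n.choose (3*t+2) : ℕ) : ℝ)) * ∑ i ∈ range n, (i.choose t : ℝ) * ((n-1-i).choose (2*t+1) : ℝ) * (A * ((i:ℝ)+1) - B')
      = A * ((n:ℝ)+1) - 3 * B' := by
    intro n hn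
    have hsplit : ∑ i ∈ range n, (i.choose t : ℝ) * ((n-1-i).choose (2*t+1) : ℝ) * (A * ((i:ℝ)+1) - B')
        = A * (((t:ℝ)+1) * ((n+1).choose (3*t+3) : ℝ)) - B' * ((n.choose (3*t+2) : ℕ) : ℝ) := by
      have hpt : ∀ i ∈ range n, (i.choose t : ℝ) * ((n-1-i).choose (2*t+1) : ℝ) * (A * ((i:ℝ)+1) - B')
          = A * ((i.choose t : ℝ) * ((n-1-i).choose (2*t+1) : ℝ) * ((i:ℝ)+1))
            - B' * ((i.choose t : ℝ) * ((n-1-i).choose (2*t+1) : ℝ)) := by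
        intro i _; ring
      rw [Finset.sum_congr rfl hpt, Finset.sum_sub_distrib, ← Finset.mul_sum, ← Finset.mul_sum,
        marg_lin, marg_one t n (by omega)]
    rw [hsplit]
    have hR := hRpos n hn
    have hRat := hRatio n
    calc (3 / ((n.choose (3*t+2) : ℕ) : ℝ)) * (A * (((t:ℝ)+1) * ((n+1).choose (3*t+3) : ℝ)) - B' * ((n.choose (3*t+2) : ℕ) : ℝ))
        = A * ((3*((t:ℝ)+1) * (((n+1).choose (3*t+3) : ℕ) : ℝ)) / ((n.choose (3*t+2) : ℕ) : ℝ))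
          - 3 * B' * (((n.choose (3*t+2) : ℕ) : ℝ) / ((n.choose (3*t+2) : ℕ) : ℝ)) := by ring
      _ = A * ((((n:ℝ)+1) * ((n.choose (3*t+2) : ℕ) : ℝ)) / ((n.choose (3*t+2) : ℕ) : ℝ))
          - 3 * B' * 1 := by rw [hRat, div_self hR.ne']
      _ = A * ((n:ℝ)+1) - 3 * B' := by
          rw [mul_div_assoc, div_self hR.ne', mul_one]
          ring
  -- recurrence for D
  have hDrec : ∀ n : ℕ, 3*t+2 ≤ n →
      D n = (P n - a * ((n:ℝ)+1)) + ∑ p ∈ Finset.Icc 1 n, ∑ q ∈ Finset.Icc (p+1) n,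
        (((p-1).choose t : ℝ) * ((q-p-1).choose t : ℝ) * ((n-q).choose t : ℝ) / (n.choose (3*t+2) : ℝ))
          * (D (p-1) + D (q-p-1) + D (n-q)) := by
    intro n hn
    have hsum : ∑ p ∈ Finset.Icc 1 n, ∑ q ∈ Finset.Icc (p+1) n,
        (((p-1).choose t : ℝ) * ((q-p-1).choose t : ℝ) * ((n-q).choose t : ℝ) / (n.choose (3*t+2) : ℝ))
          * (C (p-1) + C (q-p-1) + C (n-q))
        = (∑ p ∈ Finset.Icc 1 n, ∑ q ∈ Finset.Icc (p+1) n,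
            (((p-1).choose t : ℝ) * ((q-p-1).choose t : ℝ) * ((n-q).choose t : ℝ) / (n.choose (3*t+2) : ℝ))
              * (D (p-1) + D (q-p-1) + D (n-q)))
          + ∑ p ∈ Finset.Icc 1 n, ∑ q ∈ Finset.Icc (p+1) n,
            (((p-1).choose t : ℝ) * ((q-p-1).choose t : ℝ) * ((n-q).choose t : ℝ) / (n.choose (3*t+2) : ℝ))
              * (B (p-1) + B (q-p-1) + B (n-q)) := by
      rw [← Finset.sum_add_distrib]
      refine Finset.sum_congr rfl fun p _ => ?_
      rw [← Finset.sum_add_distrib]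
      refine Finset.sum_congr rfl fun q _ => ?_
      simp only [hD]
      ring
    have hBev : ∑ p ∈ Finset.Icc 1 n, ∑ q ∈ Finset.Icc (p+1) n,
        (((p-1).choose t : ℝ) * ((q-p-1).choose t : ℝ) * ((n-q).choose t : ℝ) / (n.choose (3*t+2) : ℝ))
          * (B (p-1) + B (q-p-1) + B (n-q)) = B n - a * ((n:ℝ)+1) := by
      rw [EV t (3*t+2) n B]
      exact hEVB n hn
    have := hrec n hn
    simp only [hD]
    rw [this, hsum, hBev]
    ring
  -- main induction
  have main : ∀ n : ℕ, |D n| ≤ A * ((n:ℝ)+1) - B' := by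
    intro n
    induction n using Nat.strong_induction_on with
    | _ n ih =>
      rcases lt_or_ge n (3*t+2) with hn | hn
      · -- base case
        have h1 : |D n| ≤ ∑ m ∈ range (3*t+2), |D m| :=
          Finset.single_le_sum (f := fun m => |D m|) (fun m _ => abs_nonneg _)
            (Finset.mem_range.mpr hn)
        have h2 : (0:ℝ) ≤ (n:ℝ) := Nat.cast_nonneg n
        have h3 : A = B' + ∑ m ∈ range (3*t+2), |D m| := hA
        nlinarith [hB'nn, hA0]
      · -- inductive case
        have hrecn := hDrec n hn
        have htri : |∑ p ∈ Finset.Icc 1 n, ∑ q ∈ Finset.Icc (p+1) n,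
            (((p-1).choose t : ℝ) * ((q-p-1).choose t : ℝ) * ((n-q).choose t : ℝ) / (n.choose (3*t+2) : ℝ))
              * (D (p-1) + D (q-p-1) + D (n-q))|
            ≤ ∑ p ∈ Finset.Icc 1 n, ∑ q ∈ Finset.Icc (p+1) n,
            (((p-1).choose t : ℝ) * ((q-p-1).choose t : ℝ) * ((n-q).choose t : ℝ) / (n.choose (3*t+2) : ℝ))
              * ((A * (((p-1 : ℕ):ℝ)+1) - B') + (A * (((q-p-1 : ℕ):ℝ)+1) - B') + (A * (((n-q : ℕ):ℝ)+1) - B')) := by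
          refine (Finset.abs_sum_le_sum_abs _ _).trans (Finset.sum_le_sum fun p hp => ?_)
          refine (Finset.abs_sum_le_sum_abs _ _).trans (Finset.sum_le_sum fun q hq => ?_)
          simp only [Finset.mem_Icc] at hp hq
          have hw : 0 ≤ ((p-1).choose t : ℝ) * ((q-p-1).choose t : ℝ) * ((n-q).choose t : ℝ) / (n.choose (3*t+2) : ℝ) := by
            positivity
          rw [abs_mul, abs_of_nonneg hw]
          apply mul_le_mul_of_nonneg_left _ hw
          have i1 : p - 1 < n := by omega
          have i2 : q - p - 1 < n := by omega
          have i3 : n - q < n := by omega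
          calc |D (p-1) + D (q-p-1) + D (n-q)|
              ≤ |D (p-1)| + |D (q-p-1)| + |D (n-q)| := by
                exact (abs_add_le _ _).trans (by linarith [abs_add_le (D (p-1)) (D (q-p-1))])
            _ ≤ (A * (((p-1 : ℕ):ℝ)+1) - B') + (A * (((q-p-1 : ℕ):ℝ)+1) - B') + (A * (((n-q : ℕ):ℝ)+1) - B') := by
                have := ih (p-1) i1
                have := ih (q-p-1) i2
                have := ih (n-q) i3
                linarith
        have hEVb : ∑ p ∈ Finset.Icc 1 n, ∑ q ∈ Finset.Icc (p+1) n,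
            (((p-1).choose t : ℝ) * ((q-p-1).choose t : ℝ) * ((n-q).choose t : ℝ) / (n.choose (3*t+2) : ℝ))
              * ((A * (((p-1 : ℕ):ℝ)+1) - B') + (A * (((q-p-1 : ℕ):ℝ)+1) - B') + (A * (((n-q : ℕ):ℝ)+1) - B'))
            = A * ((n:ℝ)+1) - 3 * B' := by
          rw [EV t (3*t+2) n (fun m => A * ((m:ℝ)+1) - B')]
          exact hEVbnd n hn
        rw [hEVb] at htri
        have hPb : |P n - a * ((n:ℝ)+1)| ≤ B' := by
          have := hK n
          have h2 : |P n - a * ((n:ℝ)+1)| ≤ |P n - a * (n:ℝ)| + |a| := by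
            have : P n - a * ((n:ℝ)+1) = (P n - a * (n:ℝ)) + (-a) := by ring
            rw [this]
            exact (abs_add_le _ _).trans (by rw [abs_neg])
          have h3 : |P n - a * (n:ℝ)| ≤ |K| := (hK n).trans (le_abs_self K)
          simp only [hB']
          linarith
        calc |D n| ≤ |P n - a * ((n:ℝ)+1)| + (A * ((n:ℝ)+1) - 3 * B') := by
              rw [hrecn]
              exact (abs_add_le _ _).trans (by linarith)
          _ ≤ A * ((n:ℝ)+1) - B' := by linarith
  -- conclusion
  refine ⟨2 * A + 5 * |1/δ * a|, fun n hn => ?_⟩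
  have hcast : (1:ℝ) ≤ (n:ℝ) := by exact_mod_cast hn
  have hlog0 : 0 ≤ Real.log n := Real.log_nonneg hcast
  have hlogn : Real.log n ≤ (n:ℝ) := by
    have := Real.log_le_sub_one_of_pos (by linarith : (0:ℝ) < (n:ℝ))
    linarith
  have hlb := harmonicNum_log_lb n hn
  have hub := harmonicNum_log_ub n hn
  have hBdiff : |B n - 1/δ * a * (n:ℝ) * Real.log n| ≤ |1/δ * a| * (5 * (n:ℝ)) := by
    have hfact : B n - 1/δ * a * (n:ℝ) * Real.log n
        = (1/δ * a) * (((n:ℝ)+1) * harmonicNum (n+1) - (n:ℝ) * Real.log n) := by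
      simp only [hB]; ring
    rw [hfact, abs_mul]
    apply mul_le_mul_of_nonneg_left _ (abs_nonneg _)
    rw [abs_le]
    constructor
    · nlinarith
    · nlinarith
  have hDn := main n
  calc |C n - 1/δ * a * (n:ℝ) * Real.log n|
      ≤ |D n| + |B n - 1/δ * a * (n:ℝ) * Real.log n| := by
        have : C n - 1/δ * a * (n:ℝ) * Real.log n = D n + (B n - 1/δ * a * (n:ℝ) * Real.log n) := by
          simp only [hD]; ring
        rw [this]
        exact abs_add_le _ _
    _ ≤ (2 * A + 5 * |1/δ * a|) * (n:ℝ) := by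
        have h1 : A * ((n:ℝ)+1) - B' ≤ 2 * A * (n:ℝ) := by nlinarith
        have h2 : |1/δ * a| * (5 * (n:ℝ)) = 5 * |1/δ * a| * (n:ℝ) := by ring
        nlinarith [hDn, hBdiff]
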